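/- Let φ: K → M be a strong covering of finite simplicial complexes (with combinatorial weights w ≡ 1). Then the i-th Betti number of K is at least the i-th Betti number of M: dim H̃^i(K, ℝ) ≥ dim H̃^i(M, ℝ) for all i. -/

import Mathlib

open Finset

variable {V : Type*} {W : Type*}

/-- An abstract simplicial complex: a collection of finite subsets of `V`
closed under taking subsets. -/
def IsComplex [DecidableEq V] (K : Finset (Finset V)) : Prop :=
  ∀ F ∈ K, ∀ G, G ⊆ F → G ∈ K

/-- The 1-skeleton graph of a complex. -/
def oneSkeleton [DecidableEq V] (K : Finset (Finset V)) : SimpleGraph V where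
  Adj u v := u ≠ v ∧ ({u, v} : Finset V) ∈ K
  symm := ⟨fun u v h => ⟨h.1.symm, by rw [Finset.pair_comm]; exact h.2⟩⟩
  loopless := ⟨fun u h => h.1 rfl⟩

/-- A strong covering of simplicial complexes `φ : K → M`:
`K` is a connected complex, `φ` is simplicial, the preimage of each face of `M`
is a disjoint union of faces of `K` each mapped bijectively onto it, and
incidences lift: whenever `G ∈ ∂ Gb` in `M` and `F ∈ φ⁻¹(G)`, there is
`Fb` of `K` with `F ∈ ∂ Fb` and `φ(Fb) = Gb`. -/
structure StrongCovering [DecidableEq V] [DecidableEq W]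
    (K : Finset (Finset V)) (M : Finset (Finset W)) (φ : V → W) : Prop where
  complexK : IsComplex K
  complexM : IsComplex M
  nonemptyK : K.Nonempty
  connectedK : ∀ u v : V, {u} ∈ K → {v} ∈ K → (oneSkeleton K).Reachable u v
  simplicial : ∀ F ∈ K, F.image φ ∈ M
  injOn : ∀ F ∈ K, Set.InjOn φ (F : Set V)
  disjointFibers : ∀ F ∈ K, ∀ F' ∈ K, F.image φ = F'.image φ → F ≠ F' → Disjoint F F'
  surjFaces : ∀ G ∈ M, ∃ F ∈ K, F.image φ = G
  strong : ∀ G ∈ M, ∀ Gb ∈ M, G ⊆ Gb → Gb.card = G.card + 1 →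
    ∀ F ∈ K, F.image φ = G → ∃ Fb ∈ K, F ⊆ Fb ∧ Fb.card = F.card + 1 ∧ Fb.image φ = Gb

/-- The canonical boundary sign `sgn([F], ∂[Fb])` with respect to the
orientations induced by the linear order on the vertices: it is `(−1)^j` if `F`
is obtained from `Fb` by deleting its `j`-th smallest vertex, and `0` if
`F ∉ ∂ Fb`. -/
def sgnBd [LinearOrder V] (F Fb : Finset V) : ℝ :=
  if F ⊆ Fb ∧ Fb.card = F.card + 1 then
    (-1 : ℝ) ^ (∑ v ∈ Fb \ F, (F.filter (· < v)).card)
  else 0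

/-- The matrix of the `i`-up Laplace operator
`L_i^up = W_i⁻¹ D_iᵀ W_{i+1} D_i` of a weighted complex `K`, with rows and
columns indexed by the `i`-faces of `K`. -/
noncomputable def lapUp [Fintype V] [LinearOrder V]
    (K : Finset (Finset V)) (w : Finset V → ℝ) (i : ℕ) :
    Matrix {F : Finset V // F ∈ K ∧ F.card = i + 1}
      {F : Finset V // F ∈ K ∧ F.card = i + 1} ℝ :=
  fun F F' => (w F.1)⁻¹ *
    ∑ Fb : {B : Finset V // B ∈ K ∧ B.card = i + 2},
      w Fb.1 * sgnBd F.1 Fb.1 * sgnBd F'.1 Fb.1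

/-- The matrix of the `i`-up Laplace operator of an incidence-signed complex
`(K, s)`: `L_i^up(K,s) = W_i⁻¹ (D_i^s)ᵀ W_{i+1} D_i^s` where
`(D_i^s)_{Fb,F} = sgn([F], ∂[Fb]) s(F, Fb)`. -/
noncomputable def lapUpSigned [Fintype V] [LinearOrder V]
    (K : Finset (Finset V)) (w : Finset V → ℝ)
    (s : Finset V → Finset V → ℝ) (i : ℕ) :
    Matrix {F : Finset V // F ∈ K ∧ F.card = i + 1}
      {F : Finset V // F ∈ K ∧ F.card = i + 1} ℝ :=
  fun F F' => (w F.1)⁻¹ *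
    ∑ Fb : {B : Finset V // B ∈ K ∧ B.card = i + 2},
      w Fb.1 * (sgnBd F.1 Fb.1 * s F.1 Fb.1) * (sgnBd F'.1 Fb.1 * s F'.1 Fb.1)

/-- The matrix of the `i`-down Laplace operator
`L_i^down = D_{i-1} W_{i-1}⁻¹ D_{i-1}ᵀ W_i` of a weighted complex `K`
(the `(i-1)`-faces have cardinality `i`; for `i = 0` this is the empty
simplex, giving the augmented/reduced version). -/
noncomputable def lapDown [Fintype V] [LinearOrder V]
    (K : Finset (Finset V)) (w : Finset V → ℝ) (i : ℕ) :
    Matrix {F : Finset V // F ∈ K ∧ F.card = i + 1}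
      {F : Finset V // F ∈ K ∧ F.card = i + 1} ℝ :=
  fun F F' =>
    (∑ H : {H : Finset V // H ∈ K ∧ H.card = i},
      sgnBd H.1 F.1 * (w H.1)⁻¹ * sgnBd H.1 F'.1) * w F'.1

/-- The sign `sgn([F], [φ(F)])` comparing the canonical orientation of a face
`F` with the orientation its image `φ(F)` inherits from `φ`: it is the sign of
the permutation sorting the `φ`-image of the sorted vertex list of `F`,
computed as the parity of the number of inversions. -/
def sgnMap {W : Type*} [LinearOrder V] [LinearOrder W] (φ : V → W) (F : Finset V) : ℝ :=
  (-1 : ℝ) ^ ((F ×ˢ F).filter fun p => p.1 < p.2 ∧ φ p.2 < φ p.1).card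

/-!
Both sides are dimensions of spaces of harmonic cochains, i.e. of cochains killed by the
coboundary `δ` and by its adjoint `δ*`. The sign-twisted lift `f̄([F]) = f([φ F]) sgn([F], [φ F])`
is injective and maps harmonic cochains of `M` to harmonic cochains of `K`. Since `φ` is
injective on faces, `sgn([φ H], ∂[φ F]) = sgn([H], ∂[F]) sgn([H], [φ H]) sgn([F], [φ F])`, and
`F ↦ φ F` matches the facets of a face of `K` with those of its image, so `δ f̄ = (δ f)‾`. For a
nonempty face `H` the strong covering property together with the disjointness of distinct lifts
matches the cofaces of `H` with those of `φ H`, so `δ* f̄ = (δ* f)‾` there. At the empty face,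
`δ* f̄` is the number of sheets of `φ` times `δ* f`; this number does not depend on the vertex,
because the sheet counts agree across every edge and `K` is connected.
-/

lemma neg_one_pow_card_filter {R α : Type*} [CommMonoid R] [HasDistribNeg R] (s : Finset α)
    (p : α → Prop) [DecidablePred p] :
    (-1 : R) ^ #(s.filter p) = ∏ x ∈ s, if p x then -1 else 1 := by
  rw [← prod_filter, prod_const]

section Signs

variable [LinearOrder V] [LinearOrder W]

lemma sgnBd_insert {H : Finset V} {v : V} (hv : v ∉ H) :
    sgnBd H (insert v H) = ∏ h ∈ H, if h < v then -1 else 1 := by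
  rw [sgnBd, if_pos ⟨subset_insert v H, card_insert_of_notMem hv⟩, insert_sdiff_cancel hv,
    sum_singleton, neg_one_pow_card_filter]

lemma subset_of_sgnBd_ne_zero {F Fb : Finset V} (h : sgnBd F Fb ≠ 0) : F ⊆ Fb := by
  by_contra hF
  exact h (if_neg fun h' => hF h'.1)

lemma sgnBd_empty_left {F : Finset V} (hF : F.card = 1) : sgnBd ∅ F = 1 := by
  simp [sgnBd, hF]

lemma sgnMap_eq_prod (φ : V → W) (F : Finset V) :
    sgnMap φ F = ∏ p ∈ F ×ˢ F, if p.1 < p.2 ∧ φ p.2 < φ p.1 then -1 else 1 :=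
  neg_one_pow_card_filter _ _

lemma sgnMap_singleton (φ : V → W) (v : V) : sgnMap φ {v} = 1 := by
  simp [sgnMap_eq_prod]

lemma sgnMap_mul_self (φ : V → W) (F : Finset V) : sgnMap φ F * sgnMap φ F = 1 := by
  rw [sgnMap, ← pow_add]
  exact Even.neg_one_pow ⟨_, rfl⟩

lemma sgnMap_ne_zero (φ : V → W) (F : Finset V) : sgnMap φ F ≠ 0 :=
  pow_ne_zero _ (neg_ne_zero.mpr one_ne_zero)

lemma sgnMap_insert (φ : V → W) {H : Finset V} {v : V} (hv : v ∉ H) :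
    sgnMap φ (insert v H) = sgnMap φ H * ∏ h ∈ H,
      (if v < h ∧ φ h < φ v then -1 else 1) * (if h < v ∧ φ v < φ h then -1 else 1) := by
  simp only [sgnMap_eq_prod, prod_product, prod_insert hv, lt_irrefl, false_and, if_false,
    one_mul, prod_mul_distrib]
  ring

theorem sgnBd_image (φ : V → W) {H F : Finset V} (hHF : H ⊆ F) (hcard : F.card = H.card + 1)
    (hinj : Set.InjOn φ F) :
    sgnBd (H.image φ) (F.image φ) = sgnBd H F * sgnMap φ H * sgnMap φ F := by
  obtain ⟨v, hvH, rfl⟩ := exists_eq_insert_iff.mpr ⟨hHF, hcard.symm⟩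
  have hinjH : Set.InjOn φ H := hinj.mono (by simp)
  have hφv : φ v ∉ H.image φ := by
    simp only [mem_image, not_exists, not_and]
    intro h hh he
    exact hvH (hinj (by simp [hh]) (by simp) he ▸ hh)
  have hne : ∀ h ∈ H, h ≠ v ∧ φ h ≠ φ v := fun h hh =>
    ⟨fun e => hvH (e ▸ hh), fun e => hφv (e ▸ mem_image_of_mem φ hh)⟩
  have key : (∏ h ∈ H, if φ h < φ v then (-1 : ℝ) else 1) = (∏ h ∈ H, if h < v then -1 else 1) *
      ∏ h ∈ H, (if v < h ∧ φ h < φ v then -1 else 1) * (if h < v ∧ φ v < φ h then -1 else 1) := by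
    rw [← prod_mul_distrib]
    refine prod_congr rfl fun h hh => ?_
    obtain ⟨hv, hφ⟩ := hne h hh
    rcases hv.lt_or_gt with h1 | h1 <;> rcases hφ.lt_or_gt with h2 | h2 <;>
      simp [h1, h2, h1.not_gt, h2.not_gt]
  rw [image_insert, sgnBd_insert hφv, sgnBd_insert hvH, sgnMap_insert φ hvH,
    prod_image hinjH, key]
  linear_combination (-(∏ h ∈ H, if h < v then (-1 : ℝ) else 1) * ∏ h ∈ H,
    (if v < h ∧ φ h < φ v then (-1 : ℝ) else 1) * (if h < v ∧ φ v < φ h then -1 else 1)) *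
    sgnMap_mul_self φ H

end Signs

open Matrix

theorem Matrix.ker_mulVecLin_transpose_mul_self_add_mul_transpose {m n k R : Type*}
    [Fintype m] [Fintype n] [Fintype k] [CommRing R] [LinearOrder R] [IsStrictOrderedRing R]
    (A : Matrix m n R) (B : Matrix n k R) :
    LinearMap.ker (Aᵀ * A + B * Bᵀ).mulVecLin
      = LinearMap.ker A.mulVecLin ⊓ LinearMap.ker Bᵀ.mulVecLin := by
  ext x
  simp only [Submodule.mem_inf, LinearMap.mem_ker, mulVecLin_apply, add_mulVec, ← mulVec_mulVec]
  refine ⟨fun h => ?_, fun ⟨hA, hB⟩ => by rw [hA, hB, mulVec_zero, mulVec_zero, add_zero]⟩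
  replace h := congr_arg (dotProduct x) h
  rw [dotProduct_add, dotProduct_mulVec x Aᵀ, dotProduct_mulVec x B, vecMul_transpose,
    ← mulVec_transpose, dotProduct_zero] at h
  obtain ⟨hA, hB⟩ := (add_eq_zero_iff_of_nonneg (sum_nonneg fun _ _ => mul_self_nonneg _)
    (sum_nonneg fun _ _ => mul_self_nonneg _)).mp h
  exact ⟨dotProduct_self_eq_zero.mp hA, dotProduct_self_eq_zero.mp hB⟩

-- The faces with `n` vertices, of dimension `n - 1`; `Faces K 0 = {∅}` carries the augmentation.
abbrev Faces (K : Finset (Finset V)) (n : ℕ) := {F : Finset V // F ∈ K ∧ F.card = n}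

noncomputable def coboundary [LinearOrder V] (K : Finset (Finset V)) (n : ℕ) :
    Matrix (Faces K (n + 1)) (Faces K n) ℝ :=
  fun Fb F => sgnBd F.1 Fb.1

section Laplacian

variable [Fintype V] [LinearOrder V] (K : Finset (Finset V)) (i : ℕ)

lemma lapUp_one : lapUp K (fun _ => 1) i = (coboundary K (i + 1))ᵀ * coboundary K (i + 1) := by
  ext F F'
  simp only [lapUp, inv_one, one_mul, Matrix.mul_apply, Matrix.transpose_apply, coboundary]

lemma lapDown_one : lapDown K (fun _ => 1) i = coboundary K i * (coboundary K i)ᵀ := by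
  ext F F'
  simp only [lapDown, inv_one, mul_one, Matrix.mul_apply, Matrix.transpose_apply, coboundary]

theorem ker_lap_one :
    LinearMap.ker (lapUp K (fun _ => 1) i + lapDown K (fun _ => 1) i).mulVecLin
      = LinearMap.ker (coboundary K (i + 1)).mulVecLin
        ⊓ LinearMap.ker (coboundary K i)ᵀ.mulVecLin := by
  rw [lapUp_one, lapDown_one, Matrix.ker_mulVecLin_transpose_mul_self_add_mul_transpose]

lemma coboundary_zero_transpose_mulVec (x : Faces K 1 → ℝ) (H : Faces K 0) :
    ((coboundary K 0)ᵀ *ᵥ x) H = ∑ F, x F := by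
  simp only [Matrix.mulVec, dotProduct, Matrix.transpose_apply, coboundary,
    card_eq_zero.mp H.2.2]
  exact sum_congr rfl fun F _ => by rw [sgnBd_empty_left F.2.2, one_mul]

end Laplacian

def vertexSheets [Fintype V] [LinearOrder V] [DecidableEq W] (K : Finset (Finset V)) (φ : V → W)
    (w : W) : Finset (Faces K 1) :=
  {F | F.1.image φ = {w}}

namespace StrongCovering

variable [LinearOrder V] [LinearOrder W]
  {K : Finset (Finset V)} {M : Finset (Finset W)} {φ : V → W}

lemma card_image (hc : StrongCovering K M φ) {F : Finset V} (hF : F ∈ K) :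
    (F.image φ).card = F.card :=
  card_image_of_injOn (hc.injOn F hF)

def imageFace (hc : StrongCovering K M φ) {n : ℕ} (F : Faces K n) : Faces M n :=
  ⟨F.1.image φ, hc.simplicial _ F.2.1, (hc.card_image F.2.1).trans F.2.2⟩

@[simp]
lemma imageFace_val (hc : StrongCovering K M φ) {n : ℕ} (F : Faces K n) :
    (hc.imageFace F).1 = F.1.image φ :=
  rfl

lemma exists_imageFace_eq (hc : StrongCovering K M φ) {n : ℕ} (G : Faces M n) :
    ∃ F : Faces K n, hc.imageFace F = G := by
  obtain ⟨F, hFK, hFG⟩ := hc.surjFaces G.1 G.2.1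
  exact ⟨⟨F, hFK, (hc.card_image hFK).symm.trans (hFG ▸ G.2.2)⟩, Subtype.ext hFG⟩

lemma exists_vertex_map_eq (hc : StrongCovering K M φ) (G : Faces M 1) :
    ∃ u, {u} ∈ K ∧ G.1 = {φ u} := by
  obtain ⟨⟨F, hFK, hF⟩, rfl⟩ := hc.exists_imageFace_eq G
  obtain ⟨u, rfl⟩ := card_eq_one.mp hF
  exact ⟨u, hFK, image_singleton φ u⟩

noncomputable def lift (hc : StrongCovering K M φ) (n : ℕ) :
    (Faces M n → ℝ) →ₗ[ℝ] (Faces K n → ℝ) where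
  toFun f F := sgnMap φ F.1 * f (hc.imageFace F)
  map_add' _ _ := funext fun _ => mul_add _ _ _
  map_smul' _ _ := funext fun _ => mul_left_comm _ _ _

lemma lift_apply (hc : StrongCovering K M φ) {n : ℕ} (f : Faces M n → ℝ) (F : Faces K n) :
    hc.lift n f F = sgnMap φ F.1 * f (hc.imageFace F) :=
  rfl

lemma lift_injective (hc : StrongCovering K M φ) (n : ℕ) : Function.Injective (hc.lift n) := by
  refine (injective_iff_map_eq_zero _).mpr fun f hf => funext fun G => ?_
  obtain ⟨F, rfl⟩ := hc.exists_imageFace_eq G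
  exact (mul_eq_zero.mp (congr_fun hf F)).resolve_left (sgnMap_ne_zero φ F.1)

variable [Fintype V]

/-- Lifting the edge `{φ u, φ u'}` at each sheet over `φ u` reaches a sheet over `φ u'`, and no
two sheets reach the same one, because distinct lifts of the edge are disjoint. -/
lemma card_vertexSheets_le_of_adj (hc : StrongCovering K M φ) {u u' : V}
    (hadj : (oneSkeleton K).Adj u u') :
    #(vertexSheets K φ (φ u)) ≤ #(vertexSheets K φ (φ u')) := by
  obtain ⟨hne, he⟩ := hadj
  have hGb : ({φ u, φ u'} : Finset W) ∈ M := by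
    simpa [image_insert] using hc.simplicial _ he
  have hφne : φ u ≠ φ u' := fun h => hne (hc.injOn _ he (by simp) (by simp) h)
  refine card_le_card_of_forall_subsingleton
    (fun F F' => ∃ Fb ∈ K, F.1 ⊆ Fb ∧ F'.1 ⊆ Fb ∧ Fb.image φ = {φ u, φ u'})
    (fun F hF => ?_) (fun F' _ F₁ hF₁ F₂ hF₂ => ?_)
  · have hFu : F.1.image φ = {φ u} := (mem_filter.mp hF).2
    obtain ⟨Fb, hFbK, hFFb, -, hFbG⟩ := hc.strong {φ u} (hc.complexM _ hGb _ (by simp)) _ hGb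
      (by simp) (by simp [card_pair hφne]) F.1 F.2.1 hFu
    obtain ⟨v', hv', hφv'⟩ := mem_image.mp (hFbG ▸ (by simp : φ u' ∈ ({φ u, φ u'} : Finset W)))
    refine ⟨⟨{v'}, hc.complexK _ hFbK _ (singleton_subset_iff.mpr hv'), card_singleton _⟩,
      mem_filter.mpr ⟨mem_univ _, by simp [hφv']⟩, Fb, hFbK, hFFb,
      singleton_subset_iff.mpr hv', hFbG⟩
  · obtain ⟨hF₁, Fb₁, hK₁, h₁, h₁', hG₁⟩ := hF₁
    obtain ⟨hF₂, Fb₂, hK₂, h₂, h₂', hG₂⟩ := hF₂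
    obtain ⟨v, hv⟩ := card_pos.mp (F'.2.2 ▸ one_pos)
    obtain rfl : Fb₁ = Fb₂ := by
      by_contra hFb
      exact disjoint_left.mp (hc.disjointFibers _ hK₁ _ hK₂ (hG₁.trans hG₂.symm) hFb)
        (h₁' hv) (h₂' hv)
    exact Subtype.ext (image_injOn_powerset_of_injOn (hc.injOn _ hK₁) (mem_powerset.mpr h₁)
      (mem_powerset.mpr h₂) ((mem_filter.mp hF₁).2.trans (mem_filter.mp hF₂).2.symm))

lemma card_vertexSheets_eq_of_reachable (hc : StrongCovering K M φ) {u v : V}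
    (h : (oneSkeleton K).Reachable u v) :
    #(vertexSheets K φ (φ u)) = #(vertexSheets K φ (φ v)) := by
  obtain ⟨p⟩ := h
  induction p with
  | nil => rfl
  | cons hadj _ ih =>
    exact (le_antisymm (hc.card_vertexSheets_le_of_adj hadj)
      (hc.card_vertexSheets_le_of_adj hadj.symm)).trans ih

lemma card_filter_imageFace_eq (hc : StrongCovering K M φ) (G G' : Faces M 1) :
    #{F | hc.imageFace F = G} = #{F | hc.imageFace F = G'} := by
  have hsheets (G : Faces M 1) (w : W) (hw : G.1 = {w}) :
      ({F | hc.imageFace F = G} : Finset (Faces K 1)) = vertexSheets K φ w := by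
    ext F
    simp [vertexSheets, Subtype.ext_iff, hw]
  obtain ⟨u, hu, hG⟩ := hc.exists_vertex_map_eq G
  obtain ⟨u', hu', hG'⟩ := hc.exists_vertex_map_eq G'
  rw [hsheets G _ hG, hsheets G' _ hG']
  exact hc.card_vertexSheets_eq_of_reachable (hc.connectedK u u' hu hu')

variable [Fintype W]

theorem coboundary_mulVec_lift (hc : StrongCovering K M φ) {n : ℕ} (f : Faces M n → ℝ)
    (Fb : Faces K (n + 1)) :
    (coboundary K n *ᵥ hc.lift n f) Fb
      = sgnMap φ Fb.1 * (coboundary M n *ᵥ f) (hc.imageFace Fb) := by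
  have hinj : Set.InjOn φ Fb.1 := hc.injOn _ Fb.2.1
  simp only [mulVec, dotProduct, coboundary, mul_sum, lift_apply]
  rw [← sum_filter_of_ne fun F _ h => subset_of_sgnBd_ne_zero (left_ne_zero_of_mul h),
    ← sum_filter_of_ne fun G _ h =>
      subset_of_sgnBd_ne_zero (left_ne_zero_of_mul (right_ne_zero_of_mul h))]
  refine sum_bij (fun F _ => hc.imageFace F) (fun F hF => ?_) (fun F₁ hF₁ F₂ hF₂ h => ?_)
    (fun G hG => ?_) (fun F hF => ?_)
  · exact mem_filter.mpr ⟨mem_univ _, image_subset_image (mem_filter.mp hF).2⟩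
  · exact Subtype.ext (image_injOn_powerset_of_injOn hinj
      (mem_powerset.mpr (mem_filter.mp hF₁).2) (mem_powerset.mpr (mem_filter.mp hF₂).2)
      (congr_arg Subtype.val h))
  · obtain ⟨F, hFFb, hFG⟩ := subset_image_iff.mp (mem_filter.mp hG).2
    have hF : F.card = n := by rw [← card_image_of_injOn (hinj.mono hFFb), hFG, G.2.2]
    exact ⟨⟨F, hc.complexK _ Fb.2.1 F hFFb, hF⟩, by simpa using hFFb, Subtype.ext hFG⟩
  · have hFFb : F.1 ⊆ Fb.1 := (mem_filter.mp hF).2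
    have hsgn := sgnBd_image φ hFFb (by rw [F.2.2, Fb.2.2]) hinj
    simp only [imageFace_val]
    linear_combination (-(sgnMap φ Fb.1 * f (hc.imageFace F))) * hsgn
      - sgnBd F.1 Fb.1 * sgnMap φ F.1 * f (hc.imageFace F) * sgnMap_mul_self φ Fb.1

theorem coboundary_transpose_mulVec_lift (hc : StrongCovering K M φ) {n : ℕ}
    (f : Faces M (n + 1) → ℝ) (H : Faces K n) (hH : H.1.Nonempty) :
    ((coboundary K n)ᵀ *ᵥ hc.lift (n + 1) f) H
      = sgnMap φ H.1 * ((coboundary M n)ᵀ *ᵥ f) (hc.imageFace H) := by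
  simp only [mulVec, dotProduct, transpose_apply, coboundary, mul_sum, lift_apply]
  rw [← sum_filter_of_ne fun F _ h => subset_of_sgnBd_ne_zero (left_ne_zero_of_mul h),
    ← sum_filter_of_ne fun G _ h =>
      subset_of_sgnBd_ne_zero (left_ne_zero_of_mul (right_ne_zero_of_mul h))]
  refine sum_bij (fun F _ => hc.imageFace F) (fun F hF => ?_) (fun F₁ hF₁ F₂ hF₂ h => ?_)
    (fun G hG => ?_) (fun F hF => ?_)
  · exact mem_filter.mpr ⟨mem_univ _, image_subset_image (mem_filter.mp hF).2⟩
  · by_contra hne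
    obtain ⟨v, hv⟩ := hH
    exact disjoint_left.mp (hc.disjointFibers _ F₁.2.1 _ F₂.2.1 (congr_arg Subtype.val h)
      (fun h' => hne (Subtype.ext h'))) ((mem_filter.mp hF₁).2 hv) ((mem_filter.mp hF₂).2 hv)
  · obtain ⟨F, hFK, hHF, hF, hFG⟩ := hc.strong _ (hc.imageFace H).2.1 G.1 G.2.1
      (mem_filter.mp hG).2 (by rw [G.2.2, (hc.imageFace H).2.2]) H.1 H.2.1 rfl
    exact ⟨⟨F, hFK, hF.trans (by rw [H.2.2])⟩, by simpa using hHF, Subtype.ext hFG⟩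
  · have hHF : H.1 ⊆ F.1 := (mem_filter.mp hF).2
    have hsgn := sgnBd_image φ hHF (by rw [F.2.2, H.2.2]) (hc.injOn _ F.2.1)
    simp only [imageFace_val]
    linear_combination (-(sgnMap φ H.1 * f (hc.imageFace F))) * hsgn
      - sgnBd H.1 F.1 * sgnMap φ F.1 * f (hc.imageFace F) * sgnMap_mul_self φ H.1

theorem coboundary_zero_transpose_mulVec_lift (hc : StrongCovering K M φ) (f : Faces M 1 → ℝ)
    (hf : (coboundary M 0)ᵀ *ᵥ f = 0) : (coboundary K 0)ᵀ *ᵥ hc.lift 1 f = 0 := by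
  funext H
  have hsum : ∑ G, f G = 0 := by
    rw [← coboundary_zero_transpose_mulVec M f (hc.imageFace H), hf, Pi.zero_apply]
  rw [coboundary_zero_transpose_mulVec, Pi.zero_apply]
  calc ∑ F, hc.lift 1 f F = ∑ F, f (hc.imageFace F) := sum_congr rfl fun F _ => by
        obtain ⟨v, hv⟩ := card_eq_one.mp F.2.2
        rw [lift_apply, hv, sgnMap_singleton, one_mul]
    _ = ∑ G, #{F | hc.imageFace F = G} • f G := by
        rw [← sum_fiberwise univ hc.imageFace]
        exact sum_congr rfl fun G _ => by
          rw [sum_congr rfl fun F hF => by rw [(mem_filter.mp hF).2], sum_const]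
    _ = 0 := by
        rcases isEmpty_or_nonempty (Faces M 1) with hM | ⟨⟨G₀⟩⟩
        · exact sum_of_isEmpty _
        · simp_rw [hc.card_filter_imageFace_eq _ G₀]
          rw [← smul_sum, hsum, smul_zero]

theorem lift_mem_ker_lap (hc : StrongCovering K M φ) (i : ℕ) {f : Faces M (i + 1) → ℝ}
    (hf : f ∈ LinearMap.ker (lapUp M (fun _ => 1) i + lapDown M (fun _ => 1) i).mulVecLin) :
    hc.lift (i + 1) f
      ∈ LinearMap.ker (lapUp K (fun _ => 1) i + lapDown K (fun _ => 1) i).mulVecLin := by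
  rw [ker_lap_one] at hf ⊢
  simp only [Submodule.mem_inf, LinearMap.mem_ker, mulVecLin_apply] at hf ⊢
  obtain ⟨hup, hdown⟩ := hf
  refine ⟨funext fun Fb => ?_, funext fun H => ?_⟩
  · rw [hc.coboundary_mulVec_lift, hup, Pi.zero_apply, Pi.zero_apply, mul_zero]
  · rcases H.1.eq_empty_or_nonempty with hH | hH
    · obtain rfl : i = 0 := by rw [← H.2.2, hH, card_empty]
      exact congr_fun (hc.coboundary_zero_transpose_mulVec_lift f hdown) H
    · rw [hc.coboundary_transpose_mulVec_lift f H hH, hdown, Pi.zero_apply, Pi.zero_apply,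
        mul_zero]

end StrongCovering

/-- for a strong covering `φ : K → M` (combinatorial weights
`w ≡ 1`), the `i`-th Betti number of `K` is at least that of `M`. By the
discrete Hodge theorem the `i`-th reduced cohomology is the kernel of the
combinatorial `i`-Laplace operator `L_i = L_i^up + L_i^down`, so the statement
reads: `dim ker L_i(M) ≤ dim ker L_i(K)`. -/
theorem betti_covering_ge [Fintype V] [LinearOrder V]
    [Fintype W] [LinearOrder W]
    (K : Finset (Finset V)) (M : Finset (Finset W)) (φ : V → W)
    (hc : StrongCovering K M φ) (i : ℕ) :
    Module.finrank ℝ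
        (LinearMap.ker ((lapUp M (fun _ => 1) i + lapDown M (fun _ => 1) i).mulVecLin))
      ≤ Module.finrank ℝ
        (LinearMap.ker ((lapUp K (fun _ => 1) i + lapDown K (fun _ => 1) i).mulVecLin)) :=
  LinearMap.finrank_le_finrank_of_injective (f := (hc.lift (i + 1)).restrict
    fun _ hf => hc.lift_mem_ker_lap i hf) fun _ _ h =>
      Subtype.ext (hc.lift_injective (i + 1) (congr_arg Subtype.val h))
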